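/- arXiv:2307.02183 — 3 statements merged into one kernel-verified Lean document; each statement's English description precedes it below -/
import Mathlib

section
/- Let H_K be an RKHS on V = {v_1,...,v_n} with kernel gram matrix K (K_{ij} = K(v_i,v_j)), and let H_R be the same vector space equipped with inner product ⟨f,g⟩_R = λ⟨f,g⟩_K + γ f^T L g, where L is symmetric PSD and λ,γ>0. Let R be the gram matrix of the reproducing kernel of H_R. Then R = K(λI + γLK)^{-1}. -/
open Matrix

/-- The gram matrix R of the reproducing kernel of H_R satisfies R = K(λI+γLK)⁻¹. -/
theorem stmt4 {n : ℕ} {H : Type*} [NormedAddCommGroup H] [InnerProductSpace ℝ H]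
    (ev : H →ₗ[ℝ] (Fin n → ℝ))
    (kK kR : Fin n → H)
    (hrepK : ∀ (f : H) (i : Fin n), (inner ℝ (f) (kK i) : ℝ) = ev f i)
    (L : Matrix (Fin n) (Fin n) ℝ) (hL : L.PosSemidef)
    (lam gam : ℝ) (hlam : 0 < lam) (hgam : 0 < gam)
    (hrepR : ∀ (f : H) (i : Fin n),
      lam * (inner ℝ (f) (kR i) : ℝ) + gam * (ev f ⬝ᵥ (L *ᵥ ev (kR i))) = ev f i)
    (K R : Matrix (Fin n) (Fin n) ℝ)
    (hKgram : ∀ i j, K i j = ev (kK j) i)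
    (hRgram : ∀ i j, R i j = ev (kR j) i)
    (hKpsd : K.PosSemidef) (hKinv : IsUnit K.det) :
    R = K * (lam • (1 : Matrix (Fin n) (Fin n) ℝ) + gam • (L * K))⁻¹ := by
  classical
  set A : Matrix (Fin n) (Fin n) ℝ := lam • (1 : Matrix (Fin n) (Fin n) ℝ) + gam • (K * L)
    with hAdef
  set A' : Matrix (Fin n) (Fin n) ℝ := lam • (1 : Matrix (Fin n) (Fin n) ℝ) + gam • (L * K)
    with hA'def
  have hKsymm : ∀ i j, K i j = K j i := fun i j => by
    simpa using (hKpsd.1.apply i j).symm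
  -- Step 1 : A * R = K
  have hAR : A * R = K := by
    ext i j
    have h1 := hrepR (kK i) j
    have hinner : (inner ℝ (kK i) (kR j) : ℝ) = R i j := by
      rw [real_inner_comm, hrepK (kR j) i, ← hRgram i j]
    have hevK : ev (kK i) = fun a => K a i := funext fun a => (hKgram a i).symm
    have hevR : ev (kR j) = fun a => R a j := funext fun a => (hRgram a j).symm
    rw [hinner, hevK, hevR] at h1
    have h2 : lam * R i j + gam * (∑ a, K i a * ∑ b, L a b * R b j) = K i j := by
      have : ((fun a => K a i) ⬝ᵥ (L *ᵥ fun a => R a j))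
          = ∑ a, K i a * ∑ b, L a b * R b j := by
        simp only [dotProduct, mulVec]
        exact Finset.sum_congr rfl fun a _ => by rw [hKsymm a i]
      rw [this] at h1
      rw [h1, hKsymm]
    calc (A * R) i j = lam * R i j + gam * ((K * (L * R)) i j) := by
          simp [hAdef, Matrix.add_mul, Matrix.smul_mul, Matrix.mul_assoc,
            Matrix.add_apply, Matrix.smul_apply, smul_eq_mul]
      _ = lam * R i j + gam * (∑ a, K i a * ∑ b, L a b * R b j) := by
          simp [Matrix.mul_apply]
      _ = K i j := h2
  -- Step 2 : invertibility
  have hKpd : K.PosDef := by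
    refine posDef_iff_dotProduct_mulVec.mpr ⟨hKpsd.1, fun x hx => ?_⟩
    rcases (hKpsd.dotProduct_mulVec_nonneg x).lt_or_eq with h | h
    · exact h
    · exfalso
      have hKx : K *ᵥ x = 0 := (hKpsd.dotProduct_mulVec_zero_iff x).mp h.symm
      have : x = 0 := by
        have := congrArg (fun v => K⁻¹ *ᵥ v) hKx
        simpa [Matrix.mulVec_mulVec, Matrix.nonsing_inv_mul K hKinv] using this
      exact hx this
  have hKinvpd : K⁻¹.PosDef := hKpd.inv
  have hB : (lam • K⁻¹ + gam • L).PosDef := by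
    rw [posDef_iff_dotProduct_mulVec]
    constructor
    · have h1 := hKinvpd.1
      have h2 := hL.1
      simp only [Matrix.IsHermitian, conjTranspose_add, conjTranspose_smul] at *
      rw [h1, h2]
      simp
    · intro x hx
      have h1 := (posDef_iff_dotProduct_mulVec.mp hKinvpd).2 hx
      have h2 := hL.dotProduct_mulVec_nonneg x
      simp only [Matrix.add_mulVec, Matrix.smul_mulVec, dotProduct_add,
        dotProduct_smul, smul_eq_mul]
      exact add_pos_of_pos_of_nonneg (mul_pos hlam h1) (mul_nonneg hgam.le h2)
  have hKBA : K * (lam • K⁻¹ + gam • L) = A := by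
    rw [Matrix.mul_add, Matrix.mul_smul, Matrix.mul_smul,
      Matrix.mul_nonsing_inv K hKinv, hAdef]
  have hAdet : IsUnit A.det := by
    rw [← hKBA, Matrix.det_mul]
    exact hKinv.mul hB.det_pos.ne'.isUnit
  have hAK' : A * K = K * A' := by
    rw [hAdef, hA'def, Matrix.add_mul, Matrix.mul_add, Matrix.smul_mul, Matrix.mul_smul,
      Matrix.smul_mul, Matrix.mul_smul, Matrix.one_mul, Matrix.mul_one, Matrix.mul_assoc]
  have hA'det : IsUnit A'.det := by
    have h := congrArg Matrix.det hAK'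
    rw [Matrix.det_mul, Matrix.det_mul] at h
    have hKd : K.det ≠ 0 := hKinv.ne_zero
    have h2 : K.det * A.det = K.det * A'.det := by rw [mul_comm K.det A.det]; exact h
    have : A.det = A'.det := mul_left_cancel₀ hKd h2
    rw [← this]; exact hAdet
  -- Step 3 : conclude
  have hmain : A * (K * A'⁻¹) = K := by
    rw [← Matrix.mul_assoc, hAK', Matrix.mul_assoc, Matrix.mul_nonsing_inv A' hA'det,
      Matrix.mul_one]
  calc R = A⁻¹ * (A * R) := by
        rw [← Matrix.mul_assoc, Matrix.nonsing_inv_mul A hAdet, Matrix.one_mul]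
    _ = A⁻¹ * (A * (K * A'⁻¹)) := by rw [hAR, hmain]
    _ = K * A'⁻¹ := by
        rw [← Matrix.mul_assoc, Matrix.nonsing_inv_mul A hAdet, Matrix.one_mul]
end

section
/- Under the setup of the previous statement, the reproducing kernel sections of H_R satisfy R(v_i,·) = Σ_{s=1}^n T_{si} K(v_s,·) for each i, where T = (λI+γLK)^{-1}; i.e., writing kernel sections in the basis {K(v_s,·)}, the coefficient matrix is T. -/
open Matrix

/-- The kernel sections of H_R expand in the basis of kernel sections of H_K
with coefficient matrix T = (λI+γLK)⁻¹: R(v_i,·) = Σ_s T_{si} K(v_s,·). -/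
theorem stmt5 {n : ℕ} {H : Type*} [NormedAddCommGroup H] [InnerProductSpace ℝ H]
    (ev : H →ₗ[ℝ] (Fin n → ℝ))
    (kK kR : Fin n → H)
    (hrepK : ∀ (f : H) (i : Fin n), (inner ℝ (f) (kK i) : ℝ) = ev f i)
    (L : Matrix (Fin n) (Fin n) ℝ) (hL : L.PosSemidef)
    (lam gam : ℝ) (hlam : 0 < lam) (hgam : 0 < gam)
    (hrepR : ∀ (f : H) (i : Fin n),
      lam * (inner ℝ (f) (kR i) : ℝ) + gam * (ev f ⬝ᵥ (L *ᵥ ev (kR i))) = ev f i)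
    (K : Matrix (Fin n) (Fin n) ℝ)
    (hKgram : ∀ i j, K i j = ev (kK j) i)
    (hKpsd : K.PosSemidef) (hKinv : IsUnit K.det) :
    ∀ i : Fin n, kR i =
      ∑ s : Fin n,
        ((lam • (1 : Matrix (Fin n) (Fin n) ℝ) + gam • (L * K))⁻¹ s i) • kK s := by
  intro i
  set M : Matrix (Fin n) (Fin n) ℝ := lam • 1 + gam • (L * K) with hM
  have hMexp : ∀ v : Fin n → ℝ, M *ᵥ v = lam • v + gam • (L *ᵥ (K *ᵥ v)) := by
    intro v
    rw [hM, add_mulVec, smul_mulVec, one_mulVec, smul_mulVec,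
      ← mulVec_mulVec]
  -- M is invertible
  have hker : ∀ v : Fin n → ℝ, M *ᵥ v = 0 → v = 0 := by
    intro v hv
    rw [hMexp] at hv
    have h1 : 0 ≤ v ⬝ᵥ (K *ᵥ v) := by simpa using hKpsd.dotProduct_mulVec_nonneg v
    have h2 : 0 ≤ (K *ᵥ v) ⬝ᵥ (L *ᵥ (K *ᵥ v)) := by simpa using hL.dotProduct_mulVec_nonneg (K *ᵥ v)
    have hdot : (K *ᵥ v) ⬝ᵥ (lam • v + gam • (L *ᵥ (K *ᵥ v))) = 0 := by
      rw [hv, dotProduct_zero]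
    rw [dotProduct_add, dotProduct_smul, dotProduct_smul, smul_eq_mul,
      smul_eq_mul, dotProduct_comm (K *ᵥ v) v] at hdot
    have hvKv : v ⬝ᵥ (K *ᵥ v) = 0 := by
      nlinarith [mul_nonneg hlam.le h1, mul_nonneg hgam.le h2]
    have hKv : K *ᵥ v = 0 := by
      have := (hKpsd.dotProduct_mulVec_zero_iff v).mp (by simpa using hvKv)
      exact this
    rw [hKv, mulVec_zero, smul_zero, add_zero] at hv
    have := smul_eq_zero.mp hv
    rcases this with h | h
    · exact absurd h hlam.ne'
    · exact h
  have hMdet : IsUnit M.det := by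
    rw [isUnit_iff_ne_zero]
    intro h0
    obtain ⟨v, hv0, hv⟩ := (Matrix.exists_mulVec_eq_zero_iff).mpr h0
    exact hv0 (hker v hv)
  -- the coefficient vector
  set w : Fin n → ℝ := ev (kR i) with hw
  set x : Fin n → ℝ := fun s => lam⁻¹ * ((Pi.single i 1 : Fin n → ℝ) s - gam * (L *ᵥ w) s) with hx
  -- kR i lies in the span with coefficients x
  have hinner : ∀ f : H, (inner ℝ f (kR i) : ℝ) = inner ℝ f (∑ s, x s • kK s) := by
    intro f
    have hR := hrepR f i
    rw [inner_sum]
    have : ∀ s, (inner ℝ f (x s • kK s) : ℝ) = x s * ev f s := by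
      intro s
      rw [real_inner_smul_right, hrepK]
    rw [Finset.sum_congr rfl fun s _ => this s]
    have hsum : ∑ s, x s * ev f s
        = lam⁻¹ * (ev f i - gam * (ev f ⬝ᵥ (L *ᵥ w))) := by
      have hone : ev f i = ∑ s, (Pi.single i 1 : Fin n → ℝ) s * ev f s := by
        simp [Pi.single_apply]
      rw [hone, dotProduct]
      simp only [hx, mul_sub, Finset.mul_sum, ← Finset.sum_sub_distrib]
      exact Finset.sum_congr rfl fun s _ => by ring
    rw [hsum]
    field_simp
    linarith [hR]
  have hspan : kR i = ∑ s, x s • kK s := by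
    have h0 : (inner ℝ (kR i - ∑ s, x s • kK s) (kR i - ∑ s, x s • kK s) : ℝ) = 0 := by
      rw [inner_sub_right, hinner (kR i - ∑ s, x s • kK s), sub_self]
    exact sub_eq_zero.mp (inner_self_eq_zero.mp h0)
  -- w = K *ᵥ x
  have hwKx : w = K *ᵥ x := by
    funext j
    rw [hw, hspan]
    rw [map_sum]
    simp only [LinearMap.map_smul]
    rw [mulVec, dotProduct, Finset.sum_apply]
    refine Finset.sum_congr rfl fun s _ => ?_
    rw [hKgram j s]
    simp [mul_comm]
  -- M x = e_i
  have hMx : M *ᵥ x = Pi.single i 1 := by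
    rw [hMexp, ← hwKx]
    funext s
    simp only [Pi.add_apply, Pi.smul_apply, smul_eq_mul, hx]
    field_simp
    ring
  -- x = M⁻¹ e_i
  have hxeq : x = M⁻¹ *ᵥ Pi.single i 1 := by
    rw [← hMx, mulVec_mulVec, Matrix.nonsing_inv_mul M hMdet, one_mulVec]
  have hxs : ∀ s, x s = M⁻¹ s i := by
    intro s
    rw [hxeq]
    simp [mulVec_single]
  rw [hspan]
  exact Finset.sum_congr rfl fun s _ => by rw [hxs s]
end

section
/- Suppose d ∈ ℝ^ℓ solves the equivalent model via d = (I + R_ℓℓ)^{-1} y_ℓ where R = K(λI+γLK)^{-1}, R_ℓℓ is the top-left ℓ×ℓ block of R, and K is symmetric positive definite and L symmetric PSD. Then a := T_ℓ d (where T = (λI+γLK)^{-1} and T_ℓ is the first ℓ columns of T) solves the original linear system (K_ℓ K_ℓ^T + λK + γKLK) a = K_ℓ y_ℓ, where K_ℓ is the first ℓ columns of K. -/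
open Matrix

lemma posSemidef_smul {n : ℕ} {M : Matrix (Fin n) (Fin n) ℝ} (hM : M.PosSemidef)
    {c : ℝ} (hc : 0 ≤ c) : (c • M).PosSemidef := by
  refine ⟨?_, fun x => ?_⟩
  · unfold Matrix.IsHermitian
    rw [conjTranspose_smul, hM.1.eq, star_trivial]
  · have := hM.2 x
    simp only [smul_mulVec, dotProduct_smul, smul_eq_mul, star_trivial] at *
    convert mul_nonneg hc this using 1
    simp only [Finsupp.sum, Finset.mul_sum, Matrix.smul_apply, smul_eq_mul]
    exact Finset.sum_congr rfl fun i _ => Finset.sum_congr rfl fun j _ => by ring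

lemma posDef_smul {n : ℕ} {M : Matrix (Fin n) (Fin n) ℝ} (hM : M.PosDef)
    {c : ℝ} (hc : 0 < c) : (c • M).PosDef := by
  refine ⟨?_, fun x hx => ?_⟩
  · unfold Matrix.IsHermitian
    rw [conjTranspose_smul, hM.1.eq, star_trivial]
  · have := hM.2 hx
    simp only [smul_mulVec, dotProduct_smul, smul_eq_mul, star_trivial] at *
    convert mul_pos hc this using 1
    simp only [Finsupp.sum, Finset.mul_sum, Matrix.smul_apply, smul_eq_mul]
    exact Finset.sum_congr rfl fun i _ => Finset.sum_congr rfl fun j _ => by ring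

/-- If d = (I + R_ℓℓ)⁻¹ y solves the equivalent model, then a = T_ℓ d solves the
original linear system (K_ℓ K_ℓᵀ + λK + γKLK) a = K_ℓ y. -/
theorem stmt13 {n ℓ : ℕ} (h : ℓ ≤ n)
    (K L : Matrix (Fin n) (Fin n) ℝ) (hK : K.PosDef) (hL : L.PosSemidef)
    (lam gam : ℝ) (hlam : 0 < lam) (hgam : 0 < gam)
    (y : Fin ℓ → ℝ)
    (T R : Matrix (Fin n) (Fin n) ℝ)
    (hT : T = (lam • (1 : Matrix (Fin n) (Fin n) ℝ) + gam • (L * K))⁻¹)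
    (hR : R = K * T)
    (Rll : Matrix (Fin ℓ) (Fin ℓ) ℝ)
    (hRll : Rll = R.submatrix (Fin.castLE h) (Fin.castLE h))
    (Kl : Matrix (Fin n) (Fin ℓ) ℝ) (hKl : Kl = K.submatrix id (Fin.castLE h))
    (Tl : Matrix (Fin n) (Fin ℓ) ℝ) (hTl : Tl = T.submatrix id (Fin.castLE h))
    (d : Fin ℓ → ℝ) (hd : d = ((1 : Matrix (Fin ℓ) (Fin ℓ) ℝ) + Rll)⁻¹ *ᵥ y)
    (a : Fin n → ℝ) (ha : a = Tl *ᵥ d) :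
    (Kl * Klᵀ + lam • K + gam • (K * L * K)) *ᵥ a = Kl *ᵥ y := by
  -- inclusion matrix
  set E : Matrix (Fin n) (Fin ℓ) ℝ :=
    Matrix.of (fun i j => if i = Fin.castLE h j then (1:ℝ) else 0) with hE
  have hmulE : ∀ {m : Type} [Fintype m] (A : Matrix m (Fin n) ℝ),
      A * E = A.submatrix id (Fin.castLE h) := by
    intro m _ A
    ext i j
    simp [hE, mul_apply, mul_ite]
  have hEmul : ∀ {m : Type} [Fintype m] (A : Matrix (Fin n) m ℝ),
      Eᵀ * A = A.submatrix (Fin.castLE h) id := by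
    intro m _ A
    ext i j
    simp [hE, mul_apply, ite_mul, transpose_apply]
  -- the matrix M
  set M : Matrix (Fin n) (Fin n) ℝ :=
    lam • (1 : Matrix (Fin n) (Fin n) ℝ) + gam • (L * K) with hM
  set P : Matrix (Fin n) (Fin n) ℝ := lam • K⁻¹ + gam • L with hP
  have hPpd : P.PosDef := (posDef_smul hK.inv hlam).add_posSemidef (posSemidef_smul hL hgam.le)
  have hKinv : K⁻¹ * K = 1 := nonsing_inv_mul K hK.det_pos.ne'.isUnit
  have hPK : P * K = M := by
    rw [hP, hM, add_mul, smul_mul_assoc, smul_mul_assoc, hKinv]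
  have hMunit : IsUnit M.det := by
    rw [← hPK, det_mul]
    exact (hPpd.det_pos.ne'.isUnit).mul hK.det_pos.ne'.isUnit
  have hMT : M * T = 1 := by rw [hT]; exact mul_nonsing_inv M hMunit
  -- R = P⁻¹
  have hRP : R = P⁻¹ := by
    have : P * R = 1 := by
      rw [hR, hP]
      calc (lam • K⁻¹ + gam • L) * (K * T)
          = ((lam • K⁻¹ + gam • L) * K) * T := by rw [mul_assoc]
        _ = M * T := by rw [hPK]
        _ = 1 := hMT
    calc R = (P⁻¹ * P) * R := by rw [nonsing_inv_mul P hPpd.det_pos.ne'.isUnit, one_mul]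
      _ = P⁻¹ * (P * R) := by rw [mul_assoc]
      _ = P⁻¹ := by rw [this, mul_one]
  -- Rll is PSD, so 1 + Rll invertible
  have hRllpsd : Rll.PosSemidef := by
    rw [hRll, hRP]
    exact (hPpd.inv).posSemidef.submatrix _
  have hIRpd : ((1 : Matrix (Fin ℓ) (Fin ℓ) ℝ) + Rll).PosDef :=
    (Matrix.PosDef.one).add_posSemidef hRllpsd
  have hIRd : ((1 : Matrix (Fin ℓ) (Fin ℓ) ℝ) + Rll) *ᵥ d = y := by
    rw [hd, mulVec_mulVec, mul_nonsing_inv _ hIRpd.det_pos.ne'.isUnit, one_mulVec]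
  -- key matrix identities
  have hTlE : Tl = T * E := by rw [hTl, hmulE]
  have hKlE : Kl = K * E := by rw [hKl, hmulE]
  have hMTl : M * Tl = E := by rw [hTlE, ← Matrix.mul_assoc, hMT, Matrix.one_mul]
  have hKsymm : Kᵀ = K := by
    ext i j
    have := congrFun (congrFun hK.1.eq j) i
    simpa [conjTranspose_apply] using this.symm
  have hKltTl : Klᵀ * Tl = Rll := by
    rw [hKlE, hTlE, transpose_mul, hKsymm, hRll, hR,
      Matrix.mul_assoc Eᵀ K (T * E), ← Matrix.mul_assoc K T E, hmulE, hEmul,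
      submatrix_submatrix]
    simp
  -- main computation
  have hKM : lam • K + gam • (K * L * K) = K * M := by
    rw [hM, mul_add, mul_smul_comm, mul_one, mul_smul_comm, mul_assoc]
  rw [ha, mulVec_mulVec, add_assoc, hKM, Matrix.add_mul,
    Matrix.mul_assoc K M Tl, hMTl, ← hKlE, Matrix.mul_assoc Kl Klᵀ Tl, hKltTl]
  rw [show Kl * Rll + Kl = Kl * ((1 : Matrix (Fin ℓ) (Fin ℓ) ℝ) + Rll) by
    rw [Matrix.mul_add, Matrix.mul_one, add_comm]]
  rw [← mulVec_mulVec, hIRd]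
end
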